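/- arXiv:2103.03514 — 4 statements merged into one kernel-verified Lean document; each statement's English description precedes it below -/
import Mathlib

section
/- Let X be an n×p real matrix with ‖XᵀX - I_p‖₂ ≤ 1/4 and define X̂ := X(3/2·I_p - 1/2·XᵀX). Then ‖X̂ᵀX̂ - I_p‖_F ≤ (13/16)·‖XᵀX - I_p‖_F². -/
/-! With `E = XᵀX - 1` the Newton–Schulz factor is `S = 3/2 - XᵀX/2 = 1 - E/2`, and the Gram matrix
of `X̂ = XS` is `S(1 + E)S = 1 - 3/4 E² + 1/4 E³`: the first-order term cancels. Hence
`X̂ᵀX̂ - 1 = (E/4 - 3/4)E²`, whose Frobenius norm is at most `‖E/4 - 3/4‖₂ ‖E‖_F²`, and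
`‖E/4 - 3/4‖₂ ≤ 1/16 + 3/4 = 13/16`. -/

open Matrix
open scoped BigOperators

/-- Frobenius norm of a real matrix. -/
noncomputable def frobNorm {n p : ℕ} (A : Matrix (Fin n) (Fin p) ℝ) : ℝ :=
  Real.sqrt (∑ i, ∑ j, (A i j) ^ 2)

/-- Spectral (ℓ₂ operator) norm of a real matrix. -/
noncomputable def specNorm {n p : ℕ} (A : Matrix (Fin n) (Fin p) ℝ) : ℝ :=
  ‖LinearMap.toContinuousLinearMap (Matrix.toEuclideanLin A)‖

/-- Symmetrization operator Φ(M) = (M + Mᵀ)/2. -/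
noncomputable def sym {p : ℕ} (M : Matrix (Fin p) (Fin p) ℝ) : Matrix (Fin p) (Fin p) ℝ :=
  ((1 : ℝ) / 2) • (M + Mᵀ)

/-- Frobenius (trace) inner product ⟨A, B⟩ = tr(AᵀB). -/
noncomputable def minner {n p : ℕ} (A B : Matrix (Fin n) (Fin p) ℝ) : ℝ :=
  Matrix.trace (Aᵀ * B)

/-- Convex subdifferential of `r` at `X` with respect to the trace inner product. -/
def msubdiff {n p : ℕ} (r : Matrix (Fin n) (Fin p) ℝ → ℝ) (X : Matrix (Fin n) (Fin p) ℝ) :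
    Set (Matrix (Fin n) (Fin p) ℝ) :=
  {W | ∀ Z, r X + minner W (Z - X) ≤ r Z}

section SpectralNorm

open scoped Matrix.Norms.L2Operator

variable {m n k : ℕ}

theorem specNorm_eq_norm (A : Matrix (Fin m) (Fin n) ℝ) : specNorm A = ‖A‖ := rfl

theorem specNorm_one_le : specNorm (1 : Matrix (Fin n) (Fin n) ℝ) ≤ 1 := by
  rw [specNorm_eq_norm, ← l2_opNorm_toEuclideanCLM, map_one]
  exact ContinuousLinearMap.norm_id_le

theorem specNorm_smul_sub_smul_one_le (a b : ℝ) (E : Matrix (Fin n) (Fin n) ℝ) :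
    specNorm (a • E - b • 1) ≤ |a| * specNorm E + |b| := by
  rw [specNorm_eq_norm, specNorm_eq_norm]
  calc ‖a • E - b • 1‖ ≤ ‖a • E‖ + ‖b • (1 : Matrix (Fin n) (Fin n) ℝ)‖ := norm_sub_le _ _
    _ = |a| * ‖E‖ + |b| * ‖(1 : Matrix (Fin n) (Fin n) ℝ)‖ := by
      rw [norm_smul, norm_smul, Real.norm_eq_abs, Real.norm_eq_abs]
    _ ≤ |a| * ‖E‖ + |b| := by
      have h1 : ‖(1 : Matrix (Fin n) (Fin n) ℝ)‖ ≤ 1 := specNorm_one_le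
      grw [h1, mul_one]

theorem norm_col_mul_le_specNorm_mul (A : Matrix (Fin m) (Fin n) ℝ) (B : Matrix (Fin n) (Fin k) ℝ)
    (j : Fin k) :
    ‖(WithLp.toLp 2 ((A * B)ᵀ j) : EuclideanSpace ℝ (Fin m))‖
      ≤ specNorm A * ‖(WithLp.toLp 2 (Bᵀ j) : EuclideanSpace ℝ (Fin n))‖ :=
  -- `(A * B)ᵀ j` is `A *ᵥ Bᵀ j` definitionally.
  l2_opNorm_mulVec A (WithLp.toLp 2 (Bᵀ j))

end SpectralNorm

section FrobeniusNorm

open scoped Matrix.Norms.Frobenius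

variable {m n k : ℕ}

theorem frobNorm_eq_norm (A : Matrix (Fin m) (Fin n) ℝ) : frobNorm A = ‖A‖ := by
  rw [frobNorm, frobenius_norm_def, ← Real.sqrt_eq_rpow]
  simp only [Real.norm_eq_abs, Real.rpow_two, sq_abs]

theorem frobNorm_mul_le (A : Matrix (Fin m) (Fin n) ℝ) (B : Matrix (Fin n) (Fin k) ℝ) :
    frobNorm (A * B) ≤ frobNorm A * frobNorm B := by
  simpa only [frobNorm_eq_norm] using frobenius_norm_mul A B

end FrobeniusNorm

theorem frobNorm_sq_eq_sum_norm_col_sq {m n : ℕ} (A : Matrix (Fin m) (Fin n) ℝ) :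
    frobNorm A ^ 2 = ∑ j, ‖(WithLp.toLp 2 (Aᵀ j) : EuclideanSpace ℝ (Fin m))‖ ^ 2 := by
  rw [frobNorm, Real.sq_sqrt (by positivity), Finset.sum_comm]
  simp only [EuclideanSpace.real_norm_sq_eq, transpose_apply]

theorem frobNorm_mul_le_specNorm_mul_frobNorm {m n k : ℕ} (A : Matrix (Fin m) (Fin n) ℝ)
    (B : Matrix (Fin n) (Fin k) ℝ) : frobNorm (A * B) ≤ specNorm A * frobNorm B := by
  have hA : 0 ≤ specNorm A := norm_nonneg _
  refine le_of_sq_le_sq ?_ (mul_nonneg hA (Real.sqrt_nonneg _))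
  rw [mul_pow, frobNorm_sq_eq_sum_norm_col_sq, frobNorm_sq_eq_sum_norm_col_sq, Finset.mul_sum]
  gcongr with j
  rw [← mul_pow]
  exact pow_le_pow_left₀ (norm_nonneg _) (norm_col_mul_le_specNorm_mul A B j) 2

theorem newtonSchulz_gram_sub_one {R : Type*} [Ring R] [Algebra ℝ R] (A : R) :
    ((3 / 2 : ℝ) • 1 - (1 / 2 : ℝ) • A) * A * ((3 / 2 : ℝ) • 1 - (1 / 2 : ℝ) • A) - 1
      = ((1 / 4 : ℝ) • (A - 1) - (3 / 4 : ℝ) • 1) * ((A - 1) * (A - 1)) := by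
  simp only [sub_mul, mul_sub, smul_mul_assoc, mul_smul_comm, smul_smul, smul_sub, one_mul,
    mul_one, mul_assoc]
  module

theorem transpose_mul_mul_self_of_isSymm {α m n : Type*} [CommSemiring α] [Fintype m] [Fintype n]
    (X : Matrix m n α) {S : Matrix n n α} (hS : S.IsSymm) :
    (X * S)ᵀ * (X * S) = S * (Xᵀ * X) * S := by
  rw [transpose_mul, hS.eq, Matrix.mul_assoc, Matrix.mul_assoc, Matrix.mul_assoc]

theorem stmt_2 {n p : ℕ} (X : Matrix (Fin n) (Fin p) ℝ)
    (hX : specNorm (Xᵀ * X - 1) ≤ 1 / 4)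
    (Xhat : Matrix (Fin n) (Fin p) ℝ)
    (hXhat : Xhat = X * (((3 : ℝ) / 2) • (1 : Matrix (Fin p) (Fin p) ℝ) - ((1 : ℝ) / 2) • (Xᵀ * X))) :
    frobNorm (Xhatᵀ * Xhat - 1) ≤ (13 / 16) * frobNorm (Xᵀ * X - 1) ^ 2 := by
  set E := Xᵀ * X - 1
  have hS : (((3 : ℝ) / 2) • (1 : Matrix (Fin p) (Fin p) ℝ) - ((1 : ℝ) / 2) • (Xᵀ * X)).IsSymm :=
    have hG : (Xᵀ * X).IsSymm := by rw [IsSymm, transpose_mul, transpose_transpose]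
    (isSymm_one.smul _).sub (hG.smul _)
  have hM : specNorm ((1 / 4 : ℝ) • E - (3 / 4 : ℝ) • 1) ≤ 13 / 16 := by
    grw [specNorm_smul_sub_smul_one_le, hX]
    norm_num
  rw [hXhat, transpose_mul_mul_self_of_isSymm X hS, newtonSchulz_gram_sub_one]
  calc _ ≤ specNorm ((1 / 4 : ℝ) • E - (3 / 4 : ℝ) • 1) * frobNorm (E * E) :=
        frobNorm_mul_le_specNorm_mul_frobNorm _ _
    _ ≤ 13 / 16 * (frobNorm E * frobNorm E) :=
        mul_le_mul hM (frobNorm_mul_le E E) (Real.sqrt_nonneg _) (by norm_num)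
    _ = 13 / 16 * frobNorm E ^ 2 := by ring
end

section
/- Let X be an n×p real matrix (n ≥ p) with ‖XᵀX - I_p‖_F ≤ 1/4, let X = UΣVᵀ be its economy-size singular value decomposition, and set X_o := UVᵀ. Then ‖X_o - X‖_F = ‖Σ - I_p‖_F ≤ ‖XᵀX - I_p‖_F. -/
open Matrix
open scoped BigOperators

lemma frob_sq_eq_trace {n p : ℕ} (A : Matrix (Fin n) (Fin p) ℝ) :
    (∑ i, ∑ j, (A i j) ^ 2) = Matrix.trace (Aᵀ * A) := by
  rw [Finset.sum_comm]
  simp [Matrix.trace, Matrix.mul_apply, Matrix.diag, sq]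

theorem stmt_7 {n p : ℕ} (hnp : p ≤ n)
    (X U : Matrix (Fin n) (Fin p) ℝ) (S V : Matrix (Fin p) (Fin p) ℝ)
    (hU : Uᵀ * U = 1)
    (hSdiag : ∀ i j, i ≠ j → S i j = 0)
    (hSpos : ∀ i, 0 ≤ S i i)
    (hV : Vᵀ * V = 1)
    (hSVD : X = U * S * Vᵀ)
    (hfeas : frobNorm (Xᵀ * X - 1) ≤ 1 / 4) :
    frobNorm (U * Vᵀ - X) = frobNorm (S - 1) ∧
      frobNorm (S - 1) ≤ frobNorm (Xᵀ * X - 1) := by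
  have hVVt : V * Vᵀ = 1 := by
    rwa [mul_eq_one_comm] at hV
  -- Part 1
  have hM : U * Vᵀ - X = U * ((1 : Matrix (Fin p) (Fin p) ℝ) - S) * Vᵀ := by
    rw [hSVD]
    simp [Matrix.mul_sub, Matrix.sub_mul, Matrix.mul_one, Matrix.mul_assoc]
  have h1 : frobNorm (U * Vᵀ - X) = frobNorm (S - 1) := by
    unfold frobNorm
    congr 1
    rw [frob_sq_eq_trace, frob_sq_eq_trace, hM]
    have key : (U * (1 - S) * Vᵀ)ᵀ * (U * (1 - S) * Vᵀ)
        = V * ((1 - S)ᵀ * (1 - S)) * Vᵀ := by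
      simp only [Matrix.transpose_mul, Matrix.transpose_transpose, Matrix.mul_assoc]
      rw [← Matrix.mul_assoc Uᵀ U, hU, Matrix.one_mul]
    rw [key, Matrix.trace_mul_cycle, ← Matrix.mul_assoc, hV, Matrix.one_mul]
    have hst : (S - 1)ᵀ * (S - 1) = (1 - S)ᵀ * (1 - S) := by
      rw [← neg_sub S 1, Matrix.transpose_neg, Matrix.neg_mul, Matrix.mul_neg, neg_neg]
    rw [hst]
  refine ⟨h1, ?_⟩
  -- Part 2
  have hXX : Xᵀ * X - 1 = V * (Sᵀ * S - 1) * Vᵀ := by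
    rw [hSVD]
    simp only [Matrix.transpose_mul, Matrix.transpose_transpose, Matrix.mul_assoc]
    rw [← Matrix.mul_assoc Uᵀ U, hU, Matrix.one_mul]
    rw [Matrix.sub_mul, Matrix.mul_sub, Matrix.one_mul, hVVt]
    simp [Matrix.mul_assoc]
  unfold frobNorm
  apply Real.sqrt_le_sqrt
  rw [frob_sq_eq_trace, frob_sq_eq_trace, hXX]
  have h2 : (V * (Sᵀ * S - 1) * Vᵀ)ᵀ * (V * (Sᵀ * S - 1) * Vᵀ)
      = V * ((Sᵀ * S - 1)ᵀ * (Sᵀ * S - 1)) * Vᵀ := by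
    simp only [Matrix.transpose_mul, Matrix.transpose_transpose, Matrix.mul_assoc]
    rw [← Matrix.mul_assoc Vᵀ V, hV, Matrix.one_mul]
  rw [h2, Matrix.trace_mul_cycle, ← Matrix.mul_assoc, hV, Matrix.one_mul]
  rw [← frob_sq_eq_trace, ← frob_sq_eq_trace]
  apply Finset.sum_le_sum
  intro i _
  apply Finset.sum_le_sum
  intro j _
  by_cases hij : i = j
  · subst hij
    have hSS : (Sᵀ * S - 1) i i = S i i ^ 2 - 1 := by
      simp only [Matrix.sub_apply, Matrix.one_apply_eq, Matrix.mul_apply,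
        Matrix.transpose_apply]
      congr 1
      rw [Finset.sum_eq_single i]
      · ring
      · intro k _ hk; rw [hSdiag k i hk]; ring
      · simp
    rw [hSS]
    simp only [Matrix.sub_apply, Matrix.one_apply_eq]
    nlinarith [hSpos i, sq_nonneg (S i i - 1), sq_nonneg (S i i)]
  · have hSS : (Sᵀ * S - 1) i j = 0 := by
      simp only [Matrix.sub_apply, Matrix.one_apply_ne hij, Matrix.mul_apply,
        Matrix.transpose_apply, sub_zero]
      apply Finset.sum_eq_zero
      intro k _
      by_cases hk : k = i
      · subst hk; rw [hSdiag k j hij]; ring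
      · rw [hSdiag k i hk]; ring
    rw [hSS]
    simp [Matrix.sub_apply, Matrix.one_apply_ne hij, hSdiag i j hij]
end

section
/- Let f, r : ℝ^{n×p} → ℝ be Lipschitz continuous with Lipschitz constants L_f and L_r respectively on a set containing X and X_o, where X satisfies ‖XᵀX - I_p‖_F ≤ 1/4 and X_o is its polar factor (so that ‖X_o - X‖_F ≤ ‖XᵀX - I_p‖_F and X_oᵀX_o = I_p). Define h(X) := f(X) + r(X) + (2L_f + 2L_r + 3/2)·‖XᵀX - I_p‖_F. Then h(X_o) ≤ h(X) - (L_f + L_r + 3/2)·‖XᵀX - I_p‖_F. -/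
open Matrix
open scoped BigOperators

/-- The SLPG merit function h(X) = f(X) + r(X) + (2L_f + 2L_r + 3/2)‖XᵀX - I‖_F. -/
noncomputable def merit {n p : ℕ} (f r : Matrix (Fin n) (Fin p) ℝ → ℝ) (Lf Lr : ℝ)
    (X : Matrix (Fin n) (Fin p) ℝ) : ℝ :=
  f X + r X + (2 * Lf + 2 * Lr + 3 / 2) * frobNorm (Xᵀ * X - 1)

theorem stmt_9 {n p : ℕ} (f r : Matrix (Fin n) (Fin p) ℝ → ℝ) (Lf Lr : ℝ)
    (hLf : 0 ≤ Lf) (hLr : 0 ≤ Lr)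
    (S : Set (Matrix (Fin n) (Fin p) ℝ))
    (hf : ∀ A ∈ S, ∀ B ∈ S, |f A - f B| ≤ Lf * frobNorm (A - B))
    (hr : ∀ A ∈ S, ∀ B ∈ S, |r A - r B| ≤ Lr * frobNorm (A - B))
    (X Xo : Matrix (Fin n) (Fin p) ℝ)
    (hXS : X ∈ S) (hXoS : Xo ∈ S)
    (hfeas : frobNorm (Xᵀ * X - 1) ≤ 1 / 4)
    (hdist : frobNorm (Xo - X) ≤ frobNorm (Xᵀ * X - 1))
    (hXo : Xoᵀ * Xo = 1) :
    merit f r Lf Lr Xo ≤ merit f r Lf Lr X - (Lf + Lr + 3 / 2) * frobNorm (Xᵀ * X - 1) := by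
  have h0 : frobNorm ((Xoᵀ * Xo : Matrix (Fin p) (Fin p) ℝ) - 1) = 0 := by
    rw [hXo]
    simp [frobNorm]
  set t := frobNorm (Xᵀ * X - 1) with ht
  have hfd : ∀ A B, 0 ≤ frobNorm (A - B : Matrix (Fin n) (Fin p) ℝ) := by
    intro A B; exact Real.sqrt_nonneg _
  have hfo : f Xo - f X ≤ Lf * t := by
    have := hf Xo hXoS X hXS
    have h2 : Lf * frobNorm (Xo - X) ≤ Lf * t := by
      exact mul_le_mul_of_nonneg_left hdist hLf
    linarith [abs_le.mp this |>.2]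
  have hro : r Xo - r X ≤ Lr * t := by
    have := hr Xo hXoS X hXS
    have h2 : Lr * frobNorm (Xo - X) ≤ Lr * t := by
      exact mul_le_mul_of_nonneg_left hdist hLr
    linarith [abs_le.mp this |>.2]
  simp only [merit, h0, ← ht]
  nlinarith [hfo, hro]
end

section
/- Let p_k(D) := ⟨D, G⟩ + r(D) + (1/(2η))‖D - X‖_F² where G ∈ ℝ^{n×p}, η > 0, X ∈ ℝ^{n×p}, and r is convex. Suppose Y ∈ ℝ^{n×p} and a symmetric matrix Λ ∈ ℝ^{p×p} satisfy 0 ∈ G - XΛ + (1/η)(Y - X) + ∂r(Y). Then Y is a global minimizer of p_k over the affine set {D : Φ(Xᵀ(D - X)) = Φ(Xᵀ(Y - X))}, where Φ(M) = (M+Mᵀ)/2. -/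
open Matrix
open scoped BigOperators

section Aux

open Matrix

lemma minner_comm {n p : ℕ} (A B : Matrix (Fin n) (Fin p) ℝ) :
    minner A B = minner B A := by
  unfold minner
  rw [← Matrix.trace_transpose (Aᵀ * B), Matrix.transpose_mul, Matrix.transpose_transpose]

lemma minner_sub_right {n p : ℕ} (A B C : Matrix (Fin n) (Fin p) ℝ) :
    minner A (B - C) = minner A B - minner A C := by
  unfold minner; rw [Matrix.mul_sub, Matrix.trace_sub]

lemma minner_add_right {n p : ℕ} (A B C : Matrix (Fin n) (Fin p) ℝ) :
    minner A (B + C) = minner A B + minner A C := by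
  unfold minner; rw [Matrix.mul_add, Matrix.trace_add]

lemma minner_add_left {n p : ℕ} (A B C : Matrix (Fin n) (Fin p) ℝ) :
    minner (A + B) C = minner A C + minner B C := by
  rw [minner_comm, minner_add_right, minner_comm C A, minner_comm C B]

lemma minner_sub_left {n p : ℕ} (A B C : Matrix (Fin n) (Fin p) ℝ) :
    minner (A - B) C = minner A C - minner B C := by
  rw [minner_comm, minner_sub_right, minner_comm C A, minner_comm C B]

lemma minner_smul_left {n p : ℕ} (c : ℝ) (A B : Matrix (Fin n) (Fin p) ℝ) :
    minner (c • A) B = c * minner A B := by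
  unfold minner
  rw [Matrix.transpose_smul, Matrix.smul_mul, Matrix.trace_smul, smul_eq_mul]

lemma minner_neg_left {n p : ℕ} (A B : Matrix (Fin n) (Fin p) ℝ) :
    minner (-A) B = - minner A B := by
  have := minner_smul_left (-1 : ℝ) A B
  simpa using this

lemma minner_self_nonneg {n p : ℕ} (A : Matrix (Fin n) (Fin p) ℝ) :
    0 ≤ minner A A := by
  unfold minner
  rw [Matrix.trace]
  apply Finset.sum_nonneg
  intro j _
  simp only [Matrix.diag_apply, Matrix.mul_apply, Matrix.transpose_apply]
  apply Finset.sum_nonneg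
  intro i _
  exact mul_self_nonneg _

lemma frob_sq {n p : ℕ} (A : Matrix (Fin n) (Fin p) ℝ) :
    frobNorm A ^ 2 = minner A A := by
  unfold frobNorm minner
  rw [Real.sq_sqrt (by positivity)]
  rw [Matrix.trace]
  rw [Finset.sum_comm]
  apply Finset.sum_congr rfl
  intro j _
  simp [Matrix.diag_apply, Matrix.mul_apply, Matrix.transpose_apply, sq]

end Aux

theorem stmt_13 {n p : ℕ} (G X Y : Matrix (Fin n) (Fin p) ℝ)
    (Λ : Matrix (Fin p) (Fin p) ℝ) (hΛ : Λᵀ = Λ)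
    (r : Matrix (Fin n) (Fin p) ℝ → ℝ) (hr : ConvexOn ℝ Set.univ r)
    (η : ℝ) (hη : 0 < η)
    (hopt : ∃ W ∈ msubdiff r Y, G - X * Λ + (1 / η) • (Y - X) + W = 0) :
    ∀ D : Matrix (Fin n) (Fin p) ℝ,
      sym (Xᵀ * (D - X)) = sym (Xᵀ * (Y - X)) →
        minner G Y + r Y + (1 / (2 * η)) * frobNorm (Y - X) ^ 2 ≤
          minner G D + r D + (1 / (2 * η)) * frobNorm (D - X) ^ 2 := by
  obtain ⟨W, hW, hEq⟩ := hopt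
  intro D hD
  set M : Matrix (Fin p) (Fin p) ℝ := Xᵀ * (D - Y) with hM
  have hMskew : Mᵀ = -M := by
    have h1 : Xᵀ * (D - Y) = Xᵀ * (D - X) - Xᵀ * (Y - X) := by
      rw [← Matrix.mul_sub]; congr 1; abel
    have h2 : sym M = 0 := by
      rw [hM, h1]
      have hs : sym (Xᵀ * (D - X) - Xᵀ * (Y - X)) =
          sym (Xᵀ * (D - X)) - sym (Xᵀ * (Y - X)) := by
        unfold sym; rw [Matrix.transpose_sub, ← smul_sub]; congr 1; abel
      rw [hs, hD, sub_self]
    have h3 : M + Mᵀ = 0 := by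
      have := congrArg (fun N => (2 : ℝ) • N) h2
      simpa [sym, smul_smul, smul_add] using this
    exact eq_neg_of_add_eq_zero_right h3
  have horth : minner (X * Λ) (D - Y) = 0 := by
    have h1 : minner (X * Λ) (D - Y) = Matrix.trace (Λ * M) := by
      unfold minner
      rw [Matrix.transpose_mul, hΛ, Matrix.mul_assoc]
    have h2 : Matrix.trace (Λ * M) = - Matrix.trace (Λ * M) := by
      conv_lhs => rw [← Matrix.trace_transpose (Λ * M), Matrix.transpose_mul, hMskew, hΛ,
        Matrix.neg_mul, Matrix.trace_neg, Matrix.trace_mul_comm]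
    rw [h1]; linarith
  have hWval : W = -(G - X * Λ + (1 / η) • (Y - X)) :=
    eq_neg_of_add_eq_zero_right hEq
  have hWinner : minner W (D - Y) =
      - minner G (D - Y) - (1 / η) * minner (Y - X) (D - Y) := by
    rw [hWval, minner_neg_left, minner_add_left, minner_sub_left, minner_smul_left, horth]
    ring
  have hsub := hW D
  rw [hWinner] at hsub
  have hG : minner G D - minner G Y = minner G (D - Y) := (minner_sub_right G D Y).symm
  have hDX : D - X = (D - Y) + (Y - X) := by abel
  have hexp : minner (D - X) (D - X) =
      minner (D - Y) (D - Y) + 2 * minner (Y - X) (D - Y) + minner (Y - X) (Y - X) := by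
    rw [hDX, minner_add_right, minner_add_left, minner_add_left,
      minner_comm (D - Y) (Y - X)]
    ring
  have hpos : 0 ≤ minner (D - Y) (D - Y) := minner_self_nonneg _
  rw [frob_sq, frob_sq, hexp]
  have hη' : (1 : ℝ) / (2 * η) * 2 = 1 / η := by field_simp
  have key : 1 / (2 * η) * (2 * minner (Y - X) (D - Y)) =
      1 / η * minner (Y - X) (D - Y) := by rw [← hη']; ring
  have hp2 : 0 ≤ 1 / (2 * η) * minner (D - Y) (D - Y) :=
    mul_nonneg (le_of_lt (by positivity)) hpos
  nlinarith [hsub, hG, key, hp2]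
end
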